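/- arXiv:math/0304104 — 5 statements merged into one kernel-verified Lean document; each statement's English description precedes it below -/
import Mathlib

section
/- Let p be a homogeneous polynomial of degree d ≥ 1 on ℝ² that is hyperbolic with respect to e = (1,0) and satisfies p(e) = 1. Then there exist real numbers g₁, …, g_d such that p(x,y) = ∏_{j=1}^{d} (gⱼ y + x) for all (x,y) ∈ ℝ²; equivalently, p(x,y) = det(xI + yG) where G is the d×d diagonal matrix with diagonal entries g₁, …, g_d. -/
/-- The univariate polynomial `t ↦ p(w - t e)` obtained by restricting the multivariate
polynomial `p` to the line through `w` in direction `-e`. -/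
noncomputable def lineRestrict {n : ℕ} (p : MvPolynomial (Fin n) ℝ) (w e : Fin n → ℝ) :
    Polynomial ℝ :=
  MvPolynomial.aeval (fun i => Polynomial.C (w i) - Polynomial.C (e i) * Polynomial.X) p

/-- A univariate real polynomial has all real roots: it splits over `ℝ`. -/
def RealRooted (f : Polynomial ℝ) : Prop := f.Splits

/-- `p` is hyperbolic with respect to `e`: `p(e) ≠ 0` and for every `w` the univariate
polynomial `t ↦ p(w - t e)` has all real roots. -/
def IsHyperbolic {n : ℕ} (p : MvPolynomial (Fin n) ℝ) (e : Fin n → ℝ) : Prop :=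
  MvPolynomial.eval e p ≠ 0 ∧ ∀ w : Fin n → ℝ, RealRooted (lineRestrict p w e)

/-- The univariate polynomial `t ↦ q(t y, t z)` for a polynomial `q` on `ℝ²`. -/
noncomputable def rayRestrict (q : MvPolynomial (Fin 2) ℝ) (y z : ℝ) : Polynomial ℝ :=
  MvPolynomial.aeval (fun i => Polynomial.C (![y, z] i) * Polynomial.X) q

/-- `q` is a real zero polynomial: for every `(y, z) ∈ ℝ²`, the univariate polynomial
`t ↦ q(t y, t z)` has all real roots. -/
def IsRealZeroPoly (q : MvPolynomial (Fin 2) ℝ) : Prop :=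
  ∀ y z : ℝ, RealRooted (rayRestrict q y z)

open Polynomial
set_option maxRecDepth 10000

lemma aux_eval_aeval {n : ℕ} (p : MvPolynomial (Fin n) ℝ) (φ : Fin n → Polynomial ℝ) (t : ℝ) :
    (MvPolynomial.aeval φ p).eval t = MvPolynomial.eval (fun i => (φ i).eval t) p := by
  induction p using MvPolynomial.induction_on with
  | C a => simp
  | add f g hf hg => simp [hf, hg]
  | mul_X f i hf => simp [hf]

lemma aux_weight {d : ℕ} {p : MvPolynomial (Fin 2) ℝ} (h : p.IsHomogeneous d)
    {m : Fin 2 →₀ ℕ} (hm : m ∈ p.support) : m 0 + m 1 = d := by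
  have := h (MvPolynomial.mem_support_iff.mp hm)
  rw [Finsupp.weight_apply, Finsupp.sum_fintype] at this
  · rw [← this]; simp [Fin.sum_univ_two]
  · simp

lemma aux_eval_smul {d : ℕ} {p : MvPolynomial (Fin 2) ℝ} (h : p.IsHomogeneous d)
    (c : ℝ) (w : Fin 2 → ℝ) :
    MvPolynomial.eval (c • w) p = c ^ d * MvPolynomial.eval w p := by
  rw [MvPolynomial.eval_eq', MvPolynomial.eval_eq', Finset.mul_sum]
  apply Finset.sum_congr rfl
  intro m hm
  have hdeg : m 0 + m 1 = d := aux_weight h hm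
  have : ∏ i, (c • w) i ^ m i = c ^ d * ∏ i, w i ^ m i := by
    simp only [Pi.smul_apply, smul_eq_mul, mul_pow, Fin.prod_univ_two, ← hdeg, pow_add]
    ring
  rw [this]; ring

lemma aux_f_eq (p : MvPolynomial (Fin 2) ℝ) :
    (MvPolynomial.aeval ![-(X : Polynomial ℝ), C 1] p) =
      ∑ m ∈ p.support, C (MvPolynomial.coeff m p * (-1) ^ (m 0)) * X ^ (m 0) := by
  rw [MvPolynomial.aeval_def, MvPolynomial.eval₂_eq']
  apply Finset.sum_congr rfl
  intro m hm
  rw [Fin.prod_univ_two]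
  have h0 : (![-(X : Polynomial ℝ), C 1] 0) = -X := rfl
  have h1 : (![-(X : Polynomial ℝ), C 1] 1) = C 1 := rfl
  rw [h0, h1, neg_pow, map_one, one_pow, mul_one, map_mul, map_pow, map_neg, map_one]
  show C (MvPolynomial.coeff m p) * ((-1)^(m 0) * X ^ (m 0)) = _
  ring

lemma aux_f_coeff (p : MvPolynomial (Fin 2) ℝ) (k : ℕ) :
    (MvPolynomial.aeval ![-(X : Polynomial ℝ), C 1] p).coeff k =
      ∑ m ∈ p.support, MvPolynomial.coeff m p * (-1) ^ (m 0) * (if k = m 0 then 1 else 0) := by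
  rw [aux_f_eq, Polynomial.finset_sum_coeff]
  apply Finset.sum_congr rfl
  intro m hm
  rw [Polynomial.coeff_C_mul, Polynomial.coeff_X_pow]

lemma aux_f_coeff_high {d : ℕ} {p : MvPolynomial (Fin 2) ℝ} (h : p.IsHomogeneous d)
    {k : ℕ} (hk : d < k) :
    (MvPolynomial.aeval ![-(X : Polynomial ℝ), C 1] p).coeff k = 0 := by
  rw [aux_f_coeff]
  apply Finset.sum_eq_zero
  intro m hm
  have hw := aux_weight h hm
  have : k ≠ m 0 := by omega
  simp [this]

lemma aux_f_coeff_d {d : ℕ} {p : MvPolynomial (Fin 2) ℝ} (h : p.IsHomogeneous d) :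
    (MvPolynomial.aeval ![-(X : Polynomial ℝ), C 1] p).coeff d =
      (-1) ^ d * MvPolynomial.eval ![1, 0] p := by
  rw [aux_f_coeff, MvPolynomial.eval_eq', Finset.mul_sum]
  apply Finset.sum_congr rfl
  intro m hm
  have hw := aux_weight h hm
  have hprod : ∏ i, (![(1:ℝ), 0] i) ^ m i = if m 1 = 0 then 1 else 0 := by
    rw [Fin.prod_univ_two]
    simp [zero_pow_eq]
  rw [hprod]
  by_cases h1 : m 1 = 0
  · have h0 : m 0 = d := by omega
    simp [h0, h1, mul_comm]
  · have h0 : d ≠ m 0 := by omega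
    simp [h0, h1]

/-- a hyperbolic polynomial of degree `d ≥ 1` on `ℝ²` with respect to `e = (1,0)`
with `p(e) = 1` is a product of linear forms `∏ j, (g j * y + x)`; equivalently
`p(x,y) = det (x I + y G)` with `G` diagonal with entries `g`. -/
theorem hyperbolic_two_vars_eq_prod_linear
    (d : ℕ) (hd : 1 ≤ d) (p : MvPolynomial (Fin 2) ℝ)
    (hhom : p.IsHomogeneous d) (hhyp : IsHyperbolic p ![1, 0])
    (hpe : MvPolynomial.eval ![1, 0] p = 1) :
    ∃ g : Fin d → ℝ,
      (∀ x y : ℝ, MvPolynomial.eval ![x, y] p = ∏ j, (g j * y + x)) ∧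
      (∀ x y : ℝ, MvPolynomial.eval ![x, y] p =
        (x • (1 : Matrix (Fin d) (Fin d) ℝ) + y • Matrix.diagonal g).det) := by
  obtain ⟨hpe0, hsp⟩ := hhyp
  set f : Polynomial ℝ := MvPolynomial.aeval ![-(X : Polynomial ℝ), C 1] p with hfdef
  have hfline : lineRestrict p ![0, 1] ![1, 0] = f := by
    unfold lineRestrict
    have : (fun i => C (![(0:ℝ), 1] i) - C (![(1:ℝ), 0] i) * X) = ![-(X : Polynomial ℝ), C 1] := by
      funext i; fin_cases i <;> simp
    rw [this]
  have hfsplit : f.Splits := by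
    have := hsp ![0, 1]
    rwa [RealRooted, hfline] at this
  have hcd : f.coeff d = (-1) ^ d := by
    rw [hfdef, aux_f_coeff_d hhom, hpe, mul_one]
  have hcdne : f.coeff d ≠ 0 := by
    rw [hcd]; positivity
  have hf0 : f ≠ 0 := fun h => hcdne (by simp [h])
  have hdeg : f.natDegree = d := by
    apply le_antisymm
    · rw [Polynomial.natDegree_le_iff_coeff_eq_zero]
      intro k hk
      exact aux_f_coeff_high hhom hk
    · exact Polynomial.le_natDegree_of_ne_zero hcdne
  have hlc : f.leadingCoeff = (-1) ^ d := by
    rw [Polynomial.leadingCoeff, hdeg, hcd]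
  have hcard : f.roots.card = d := by
    rw [← hdeg]
    exact (Polynomial.splits_iff_card_roots.mp hfsplit)
  -- evaluation of f
  have hfeval : ∀ t : ℝ, f.eval t = MvPolynomial.eval ![-t, 1] p := by
    intro t
    rw [hfdef, aux_eval_aeval]
    have : (fun i => (![-(X : Polynomial ℝ), C 1] i).eval t) = ![-t, 1] := by
      funext i; fin_cases i <;> simp
    rw [this]
  have hfprod : f = C ((-1 : ℝ) ^ d) * (f.roots.map fun a => X - C a).prod := by
    rw [← hlc]
    exact (Polynomial.C_leadingCoeff_mul_prod_multiset_X_sub_C (Polynomial.splits_iff_card_roots.mp hfsplit)).symm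
  have hfeval' : ∀ t : ℝ, f.eval t = (-1 : ℝ) ^ d * (f.roots.map fun a => t - a).prod := by
    intro t
    conv_lhs => rw [hfprod]
    rw [Polynomial.eval_mul, Polynomial.eval_C, Polynomial.eval_multiset_prod,
      Multiset.map_map]
    congr 2
    apply Multiset.map_congr rfl
    intro a _
    simp
  -- the list of roots
  set l : List ℝ := f.roots.toList with hldef
  have hl : l.length = d := by rw [hldef, Multiset.length_toList, hcard]
  set g : Fin d → ℝ := fun j => l.get (Fin.cast hl.symm j) with hgdef
  have hgprod : ∀ h : ℝ → ℝ, ∏ j, h (g j) = (f.roots.map h).prod := by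
    intro h
    have h1 : f.roots.map h = ((l.map h : List ℝ) : Multiset ℝ) := by
      rw [hldef, ← Multiset.map_coe, Multiset.coe_toList]
    rw [h1, Multiset.prod_coe]
    have h2 : l.map h = List.ofFn (h ∘ l.get) := by
      conv_lhs => rw [← List.ofFn_get l]
      rw [List.map_ofFn]
    rw [h2, List.prod_ofFn]
    rw [← Fin.prod_congr' _ hl]
    rfl
  -- main identity, first for y ≠ 0
  have key : ∀ x y : ℝ, y ≠ 0 → MvPolynomial.eval ![x, y] p = ∏ j, (g j * y + x) := by
    intro x y hy
    have hsmul : ![x, y] = y • ![x / y, 1] := by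
      funext i
      fin_cases i
      · show x = y * (x / y)
        rw [mul_div_cancel₀ _ hy]
      · show y = y * 1
        rw [mul_one]
    rw [hsmul, aux_eval_smul hhom]
    have : MvPolynomial.eval ![x / y, 1] p = f.eval (-(x / y)) := by
      rw [hfeval (-(x/y))]
      norm_num
    rw [this, hfeval', hgprod (fun a => a * y + x)]
    rw [← mul_assoc]
    have hyd : y ^ d * (-1 : ℝ) ^ d = (f.roots.map fun _ => -y).prod := by
      rw [Multiset.map_const', Multiset.prod_replicate, hcard, neg_pow]
      ring
    rw [hyd, ← Multiset.prod_map_mul]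
    congr 1
    apply Multiset.map_congr rfl
    intro a _
    field_simp
    ring
  -- extend to all y via polynomial identity
  have keyall : ∀ x y : ℝ, MvPolynomial.eval ![x, y] p = ∏ j, (g j * y + x) := by
    intro x y
    set q1 : Polynomial ℝ := MvPolynomial.aeval ![C x, X] p with hq1
    set q2 : Polynomial ℝ := ∏ j, (C (g j) * X + C x) with hq2
    have hq1e : ∀ t : ℝ, q1.eval t = MvPolynomial.eval ![x, t] p := by
      intro t
      rw [hq1, aux_eval_aeval]
      have : (fun i => (![C x, (X : Polynomial ℝ)] i).eval t) = ![x, t] := by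
        funext i; fin_cases i <;> simp
      rw [this]
    have hq2e : ∀ t : ℝ, q2.eval t = ∏ j, (g j * t + x) := by
      intro t
      rw [hq2, Polynomial.eval_prod]
      simp
    have : q1 = q2 := by
      apply Polynomial.eq_of_infinite_eval_eq
      apply Set.Infinite.mono (s := {y : ℝ | y ≠ 0})
      · intro t ht
        simp only [Set.mem_setOf_eq]
        rw [hq1e, hq2e]
        exact key x t ht
      · exact Set.infinite_of_finite_compl (by simp)
    rw [← hq1e, this, hq2e]
  refine ⟨g, keyall, fun x y => ?_⟩
  rw [keyall]
  have hm : x • (1 : Matrix (Fin d) (Fin d) ℝ) + y • Matrix.diagonal g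
      = Matrix.diagonal (fun j => g j * y + x) := by
    ext i j
    by_cases h : i = j
    · subst h; simp [Matrix.one_apply]; ring
    · simp [Matrix.one_apply_ne h, Matrix.diagonal_apply_ne _ h]
  rw [hm, Matrix.det_diagonal]
end

section
/- Let q be a real zero polynomial of degree d on ℝ² satisfying q(0,0) = 1. Then the polynomial p on ℝ³ defined by p(x,y,z) = xᵈ q(y/x, z/x) for x ≠ 0, and extended to all of ℝ³ by continuity (equivalently, the degree-d homogenization of q), is a homogeneous polynomial of degree d on ℝ³ that is hyperbolic with respect to e = (1,0,0) and satisfies p(e) = 1. -/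


lemma eval_aeval_poly {n : ℕ} (g : Fin n → Polynomial ℝ) (q : MvPolynomial (Fin n) ℝ) (t : ℝ) :
    Polynomial.eval t (MvPolynomial.aeval g q)
      = MvPolynomial.eval (fun i => Polynomial.eval t (g i)) q := by
  induction q using MvPolynomial.induction_on with
  | C a => simp [MvPolynomial.algebraMap_eq]
  | add p q hp hq => simp [hp, hq]
  | mul_X p i hp => simp [hp]

lemma natDegree_aeval_le {n : ℕ} (g : Fin n → Polynomial ℝ) (hg : ∀ i, (g i).natDegree ≤ 1)
    (q : MvPolynomial (Fin n) ℝ) :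
    (MvPolynomial.aeval g q).natDegree ≤ q.totalDegree := by
  rw [MvPolynomial.aeval_def, MvPolynomial.eval₂_eq]
  refine Polynomial.natDegree_sum_le_of_forall_le _ _ (fun m hm => ?_)
  refine le_trans (Polynomial.natDegree_C_mul_le _ _) ?_
  refine le_trans (Polynomial.natDegree_prod_le _ _) ?_
  refine le_trans (Finset.sum_le_sum (fun i _ =>
    le_trans (Polynomial.natDegree_pow_le) (by
      calc m i * (g i).natDegree ≤ m i * 1 := Nat.mul_le_mul_left _ (hg i)
        _ = m i := Nat.mul_one _))) ?_
  calc ∑ i ∈ m.support, m i = m.sum fun _ e => e := rfl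
    _ ≤ q.totalDegree := MvPolynomial.le_totalDegree hm

/-- if `q` is a real zero polynomial of degree `d` on `ℝ²` with `q(0,0) = 1`,
then its degree-`d` homogenization `p` (the homogeneous polynomial of degree `d` with
`p(x,y,z) = x^d q(y/x, z/x)` for `x ≠ 0`) is hyperbolic with respect to `e = (1,0,0)` and
satisfies `p(e) = 1`. -/
theorem realZeroPoly_homogenization_isHyperbolic
    (d : ℕ) (q : MvPolynomial (Fin 2) ℝ)
    (hq : IsRealZeroPoly q) (hdeg : q.totalDegree = d)
    (hq0 : MvPolynomial.eval ![0, 0] q = 1)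
    (p : MvPolynomial (Fin 3) ℝ) (hphom : p.IsHomogeneous d)
    (hpq : ∀ x y z : ℝ, x ≠ 0 →
      MvPolynomial.eval ![x, y, z] p = x ^ d * MvPolynomial.eval ![y / x, z / x] q) :
    IsHyperbolic p ![1, 0, 0] ∧ MvPolynomial.eval ![1, 0, 0] p = 1 := by
  have hpe : MvPolynomial.eval ![1, 0, 0] p = 1 := by
    simpa [hq0] using hpq 1 0 0 one_ne_zero
  refine ⟨⟨by rw [hpe]; exact one_ne_zero, ?_⟩, hpe⟩
  intro w
  set r : Polynomial ℝ := rayRestrict q (w 1) (w 2) with hrdef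
  have hrs : r.Splits := hq (w 1) (w 2)
  set R : Multiset ℝ := r.roots with hR
  have hcard : R.card = r.natDegree := by
    have := Polynomial.Splits.natDegree_eq_card_roots hrs
    simpa [hR] using this.symm
  have hkd : r.natDegree ≤ d := by
    rw [← hdeg, hrdef]
    unfold rayRestrict
    exact natDegree_aeval_le _
      (fun i => le_trans (Polynomial.natDegree_C_mul_le _ _) Polynomial.natDegree_X_le) q
  set lc := r.leadingCoeff with hlc
  set F : Polynomial ℝ := Polynomial.C lc
      * (Polynomial.C (w 0) - Polynomial.X) ^ (d - r.natDegree)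
      * (R.map fun a => Polynomial.C (1 - a * w 0) + Polynomial.C a * Polynomial.X).prod with hF
  have hFs : F.Splits := by
    refine Polynomial.Splits.mul (Polynomial.Splits.mul (Polynomial.Splits.C _)
      (Polynomial.Splits.pow ?_ _)) ?_
    · exact Polynomial.Splits.of_natDegree_le_one
        (le_trans (Polynomial.natDegree_sub_le _ _) (by simp))
    · refine Multiset.prod_induction _ _ (fun a b ha hb => Polynomial.Splits.mul ha hb)
        (Polynomial.Splits.one) ?_
      intro f hf
      obtain ⟨a, _, rfl⟩ := Multiset.mem_map.mp hf
      refine Polynomial.Splits.of_natDegree_le_one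
        (le_trans (Polynomial.natDegree_add_le _ _) ?_)
      exact max_le (by rw [Polynomial.natDegree_C]; omega)
        (le_trans (Polynomial.natDegree_C_mul_le _ _) Polynomial.natDegree_X_le)
  have hfun : lineRestrict p w ![1, 0, 0] = F := by
    apply Polynomial.eq_of_infinite_eval_eq
    refine Set.Infinite.mono ?_ ((Set.finite_singleton (w 0)).infinite_compl)
    intro t ht
    have ht' : t ≠ w 0 := ht
    have hx : w 0 - t ≠ 0 := sub_ne_zero_of_ne (Ne.symm ht')
    have h1 : Polynomial.eval t (lineRestrict p w ![1, 0, 0])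
        = MvPolynomial.eval ![w 0 - t, w 1, w 2] p := by
      rw [lineRestrict, eval_aeval_poly]
      have hv : (fun i => Polynomial.eval t
          (Polynomial.C (w i) - Polynomial.C (![1, 0, 0] i) * Polynomial.X))
          = ![w 0 - t, w 1, w 2] := by
        funext i; fin_cases i <;> simp
      exact congrArg (fun v => MvPolynomial.eval v p) hv
    have h2 : MvPolynomial.eval ![w 1 / (w 0 - t), w 2 / (w 0 - t)] q
        = Polynomial.eval (w 0 - t)⁻¹ r := by
      rw [hrdef, rayRestrict, eval_aeval_poly]
      have hv : (![w 1 / (w 0 - t), w 2 / (w 0 - t)] : Fin 2 → ℝ)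
          = (fun i => Polynomial.eval (w 0 - t)⁻¹
              (Polynomial.C (![w 1, w 2] i) * Polynomial.X)) := by
        funext i; fin_cases i <;> simp [div_eq_mul_inv]
      exact congrArg (fun v => MvPolynomial.eval v q) hv
    have hroots := Polynomial.Splits.eq_prod_roots hrs
    have h3 : Polynomial.eval (w 0 - t)⁻¹ r
        = lc * (R.map fun a => (w 0 - t)⁻¹ - a).prod := by
      conv_lhs => rw [hroots]
      simp [Polynomial.eval_multiset_prod, Multiset.map_map, Function.comp]
      rfl
    have h5 : Polynomial.eval t
          (R.map fun a => Polynomial.C (1 - a * w 0) + Polynomial.C a * Polynomial.X).prod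
        = (R.map fun a => 1 - a * (w 0 - t)).prod := by
      rw [Polynomial.eval_multiset_prod, Multiset.map_map]
      congr 1
      apply Multiset.map_congr rfl
      intro a _
      simp only [Function.comp_apply, Polynomial.eval_add, Polynomial.eval_mul,
        Polynomial.eval_C, Polynomial.eval_X]
      ring
    have h4 : (w 0 - t) ^ R.card * (R.map fun a => (w 0 - t)⁻¹ - a).prod
        = (R.map fun a => 1 - a * (w 0 - t)).prod := by
      rw [← Multiset.prod_replicate, ← Multiset.map_const', ← Multiset.prod_map_mul]
      congr 1
      apply Multiset.map_congr rfl
      intro a _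
      field_simp
    have hsplit : (w 0 - t) ^ d
        = (w 0 - t) ^ (d - r.natDegree) * (w 0 - t) ^ R.card := by
      rw [hcard, pow_sub_mul_pow _ hkd]
    show Polynomial.eval t (lineRestrict p w ![1, 0, 0]) = Polynomial.eval t F
    rw [h1, hpq _ _ _ hx, h2, h3, hF, Polynomial.eval_mul, Polynomial.eval_mul,
      Polynomial.eval_C, Polynomial.eval_pow, Polynomial.eval_sub, Polynomial.eval_C,
      Polynomial.eval_X, h5, hsplit, ← h4]
    ring
  show (lineRestrict p w ![1, 0, 0]).Splits
  rw [hfun]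
  exact hFs
end

section
/- Suppose that for every positive integer d, every real zero polynomial q of degree d on ℝ² with q(0,0) = 1 can be written as q(y,z) = det(I + yB + zC) for some d×d real symmetric matrices B and C. Then for every positive integer d, every homogeneous polynomial p of degree d on ℝ³ that is hyperbolic with respect to e = (1,0,0) and satisfies p(e) = 1 can be written as p(x,y,z) = det(xI + yB + zC) for some d×d real symmetric matrices B and C. -/
open Polynomial

namespace LaxAux

lemma splits_reflect_multiset (s : Multiset ℝ) :
    ∀ N : ℕ, Multiset.card s ≤ N → ∀ a : ℝ,
      ((Polynomial.C a * (s.map fun r => Polynomial.X - Polynomial.C r).prod).reflect N).Splits := by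
  induction s using Multiset.induction with
  | empty =>
      intro N _ a
      simp only [Multiset.map_zero, Multiset.prod_zero, mul_one, Polynomial.reflect_C]
      exact (Splits.C _).mul (Splits.X.pow _)
  | cons r s ih =>
      intro N hN a
      rw [Multiset.card_cons] at hN
      have hcard : Multiset.card s ≤ N - 1 := by omega
      have hdeg : (Polynomial.C a * (s.map fun r => Polynomial.X - Polynomial.C r).prod).natDegree
          ≤ N - 1 := by
        refine natDegree_mul_le.trans ?_
        have h1 := Polynomial.natDegree_multiset_prod_le
          (s.map fun r => Polynomial.X - Polynomial.C r)
        have h2 : ((s.map fun r => Polynomial.X - Polynomial.C r).map natDegree).sum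
            ≤ Multiset.card ((s.map fun r => Polynomial.X - Polynomial.C r).map natDegree) • 1 :=
          Multiset.sum_le_card_nsmul _ _ (by
            intro x hx
            simp only [Multiset.mem_map] at hx
            obtain ⟨f, ⟨y, -, rfl⟩, rfl⟩ := hx
            simp [natDegree_X_sub_C])
        simp only [smul_eq_mul, mul_one, Multiset.card_map] at h2
        simp only [natDegree_C, zero_add]
        omega
      have key : Polynomial.C a * ((r ::ₘ s).map fun r => Polynomial.X - Polynomial.C r).prod
          = (Polynomial.X - Polynomial.C r) *
            (Polynomial.C a * (s.map fun r => Polynomial.X - Polynomial.C r).prod) := by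
        rw [Multiset.map_cons, Multiset.prod_cons]; ring
      rw [key, show N = 1 + (N - 1) by omega,
        Polynomial.reflect_mul _ _ (by simp [natDegree_X_sub_C]) hdeg]
      refine Splits.mul (Splits.of_natDegree_le_one ?_) (ih _ hcard a)
      have hrefl : Polynomial.reflect 1 (Polynomial.X - Polynomial.C r)
          = 1 - Polynomial.C r * Polynomial.X := by
        rw [Polynomial.reflect_sub, Polynomial.reflect_C,
          show (Polynomial.X : ℝ[X]) = Polynomial.X ^ 1 by ring, Polynomial.reflect_monomial]
        simp
      rw [hrefl]
      exact (natDegree_sub_le _ _).trans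
        (max_le (by simp) ((natDegree_C_mul_le _ _).trans (by simp)))

lemma splits_reflect {f : ℝ[X]} {N : ℕ} (hf : f.Splits) (hN : f.natDegree ≤ N) :
    (f.reflect N).Splits := by
  rcases eq_or_ne f 0 with rfl | h0
  · simpa [Polynomial.reflect_zero] using (Splits.zero : Splits (0 : ℝ[X]))
  obtain ⟨s, hs⟩ := splits_iff_exists_multiset.mp hf
  have hcard : Multiset.card s ≤ N := by
    have he : f.natDegree = Multiset.card s := by
      rw [hs, natDegree_C_mul (leadingCoeff_ne_zero.mpr h0),
        Polynomial.natDegree_multiset_prod_X_sub_C_eq_card]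
    omega
  rw [hs]
  exact splits_reflect_multiset s N hcard _

lemma eval_reflect {f : ℝ[X]} {N : ℕ} (hN : f.natDegree ≤ N) {t : ℝ} (ht : t ≠ 0) :
    (f.reflect N).eval t = t ^ N * f.eval t⁻¹ := by
  have : Invertible (t⁻¹ : ℝ) := invertibleOfNonzero (inv_ne_zero ht)
  have h := Polynomial.eval₂_reflect_mul_pow (RingHom.id ℝ) t⁻¹ N f hN
  rw [invOf_eq_inv, inv_inv] at h
  have h' : (f.reflect N).eval t * t⁻¹ ^ N = f.eval t⁻¹ := h
  calc (f.reflect N).eval t = (f.reflect N).eval t * t⁻¹ ^ N * t ^ N := by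
        rw [mul_assoc, ← mul_pow, inv_mul_cancel₀ ht, one_pow, mul_one]
    _ = t ^ N * f.eval t⁻¹ := by rw [h']; ring

lemma eval_smul_of_isHomogeneous {n d : ℕ} {p : MvPolynomial (Fin n) ℝ}
    (hp : p.IsHomogeneous d) (c : ℝ) (v : Fin n → ℝ) :
    MvPolynomial.eval (c • v) p = c ^ d * MvPolynomial.eval v p := by
  rw [MvPolynomial.eval_eq, MvPolynomial.eval_eq, Finset.mul_sum]
  refine Finset.sum_congr rfl fun m hm => ?_
  have hdeg : (∑ i ∈ m.support, m i) = d := by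
    by_contra h
    exact (MvPolynomial.mem_support_iff.mp hm) (hp.coeff_eq_zero (by simpa [Finsupp.degree_apply] using h))
  have hprod : ∏ i ∈ m.support, (c • v) i ^ m i = c ^ d * ∏ i ∈ m.support, v i ^ m i := by
    simp only [Pi.smul_apply, smul_eq_mul, mul_pow]
    rw [Finset.prod_mul_distrib, Finset.prod_pow_eq_pow_sum, hdeg]
  rw [hprod]; ring

lemma natDegree_aeval_le {n : ℕ} (u : Fin n → ℝ[X]) (hu : ∀ i, (u i).natDegree ≤ 1)
    (p : MvPolynomial (Fin n) ℝ) : (MvPolynomial.aeval u p).natDegree ≤ p.totalDegree := by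
  conv_lhs => rw [p.as_sum]
  rw [map_sum]
  refine Polynomial.natDegree_sum_le_of_forall_le _ _ fun m hm => ?_
  rw [MvPolynomial.aeval_monomial]
  refine natDegree_mul_le.trans ?_
  have h1 : (algebraMap ℝ ℝ[X] (MvPolynomial.coeff m p)).natDegree = 0 := by
    rw [Polynomial.algebraMap_eq]; exact natDegree_C _
  have h2 : (m.prod fun i k => u i ^ k).natDegree ≤ m.sum fun _ e => e := by
    rw [Finsupp.prod]
    refine (Polynomial.natDegree_prod_le _ _).trans ?_
    rw [Finsupp.sum]
    refine Finset.sum_le_sum fun i _ => ?_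
    exact natDegree_pow_le.trans (by
      calc m i * (u i).natDegree ≤ m i * 1 := Nat.mul_le_mul_left _ (hu i)
        _ = m i := Nat.mul_one _)
  calc _ ≤ 0 + (m.sum fun _ e => e) := by omega
    _ ≤ p.totalDegree := by simpa using MvPolynomial.le_totalDegree hm

lemma totalDegree_aeval_le {n m : ℕ} (u : Fin n → MvPolynomial (Fin m) ℝ)
    (hu : ∀ i, (u i).totalDegree ≤ 1) (p : MvPolynomial (Fin n) ℝ) :
    (MvPolynomial.aeval u p).totalDegree ≤ p.totalDegree := by
  conv_lhs => rw [p.as_sum]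
  rw [map_sum]
  refine (MvPolynomial.totalDegree_finset_sum _ _).trans ?_
  rw [Finset.sup_le_iff]
  intro m' hm'
  rw [MvPolynomial.aeval_monomial]
  refine (MvPolynomial.totalDegree_mul _ _).trans ?_
  have h1 : (algebraMap ℝ (MvPolynomial (Fin m) ℝ) (MvPolynomial.coeff m' p)).totalDegree = 0 := by
    rw [MvPolynomial.algebraMap_eq]; exact MvPolynomial.totalDegree_C _
  have h2 : (m'.prod fun i k => u i ^ k).totalDegree ≤ m'.sum fun _ e => e := by
    rw [Finsupp.prod]
    refine (MvPolynomial.totalDegree_finset_prod _ _).trans ?_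
    rw [Finsupp.sum]
    refine Finset.sum_le_sum fun i _ => ?_
    exact (MvPolynomial.totalDegree_pow _ _).trans (by
      calc m' i * (u i).totalDegree ≤ m' i * 1 := Nat.mul_le_mul_left _ (hu i)
        _ = m' i := Nat.mul_one _)
  calc _ ≤ 0 + (m'.sum fun _ e => e) := by omega
    _ ≤ p.totalDegree := by simpa using MvPolynomial.le_totalDegree hm'

lemma eval_mv_aeval {n m : ℕ} (v : Fin n → MvPolynomial (Fin m) ℝ) (g : Fin m → ℝ)
    (p : MvPolynomial (Fin n) ℝ) :
    MvPolynomial.eval g (MvPolynomial.aeval v p)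
      = MvPolynomial.eval (fun i => MvPolynomial.eval g (v i)) p :=
  MvPolynomial.comp_aeval_apply (f := v) (MvPolynomial.aeval g) p

lemma poly_eval_mv_aeval {n : ℕ} (v : Fin n → Polynomial ℝ) (p : MvPolynomial (Fin n) ℝ) (t : ℝ) :
    (MvPolynomial.aeval v p).eval t = MvPolynomial.eval (fun i => (v i).eval t) p := by
  have h := MvPolynomial.comp_aeval_apply (f := v) (Polynomial.aeval t) p
  simp only [Polynomial.coe_aeval_eq_eval] at h
  exact h

lemma mv_aeval_mv_aeval {n m : ℕ} (v : Fin n → MvPolynomial (Fin m) ℝ)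
    (w : Fin m → Polynomial ℝ) (p : MvPolynomial (Fin n) ℝ) :
    MvPolynomial.aeval w (MvPolynomial.aeval v p)
      = MvPolynomial.aeval (fun i => MvPolynomial.aeval w (v i)) p :=
  MvPolynomial.comp_aeval_apply (f := v) (MvPolynomial.aeval w) p

lemma eq_C_of_totalDegree_eq_zero {q : MvPolynomial (Fin 2) ℝ} (h : q.totalDegree = 0) :
    q = MvPolynomial.C (MvPolynomial.coeff 0 q) := by
  rw [MvPolynomial.totalDegree_eq_zero_iff] at h
  ext m
  rw [MvPolynomial.coeff_C]
  by_cases hm : m = 0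
  · subst hm; simp
  · rw [if_neg (by exact fun hc => hm hc.symm)]
    by_contra hc
    exact hm (Finsupp.ext fun x => h m (MvPolynomial.mem_support_iff.mpr hc) x)

end LaxAux


/-- the Helton–Vinnikov theorem (every real zero polynomial of degree `d` with
`q(0,0) = 1` is `det (I + y B + z C)`) implies the Lax conjecture (every hyperbolic polynomial
of degree `d` on `ℝ³` with respect to `(1,0,0)` with `p(e) = 1` is `det (x I + y B + z C)`). -/
theorem helton_vinnikov_implies_lax
    (H : ∀ d : ℕ, 0 < d → ∀ q : MvPolynomial (Fin 2) ℝ,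
      IsRealZeroPoly q → q.totalDegree = d → MvPolynomial.eval ![0, 0] q = 1 →
      ∃ B C : Matrix (Fin d) (Fin d) ℝ, B.IsSymm ∧ C.IsSymm ∧
        ∀ y z : ℝ, MvPolynomial.eval ![y, z] q =
          ((1 : Matrix (Fin d) (Fin d) ℝ) + y • B + z • C).det) :
    ∀ d : ℕ, 0 < d → ∀ p : MvPolynomial (Fin 3) ℝ,
      p.IsHomogeneous d → IsHyperbolic p ![1, 0, 0] →
      MvPolynomial.eval ![1, 0, 0] p = 1 →
      ∃ B C : Matrix (Fin d) (Fin d) ℝ, B.IsSymm ∧ C.IsSymm ∧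
        ∀ x y z : ℝ, MvPolynomial.eval ![x, y, z] p =
          (x • (1 : Matrix (Fin d) (Fin d) ℝ) + y • B + z • C).det := by

  intro d hd p hhom hhyp heval
  classical
  set v : Fin 3 → MvPolynomial (Fin 2) ℝ := ![1, MvPolynomial.X 0, MvPolynomial.X 1] with hv
  set q : MvPolynomial (Fin 2) ℝ := MvPolynomial.aeval v p with hqdef
  have hqeval : ∀ y z : ℝ, MvPolynomial.eval ![y, z] q = MvPolynomial.eval ![1, y, z] p := by
    intro y z
    rw [hqdef, LaxAux.eval_mv_aeval]
    exact congrArg (fun w : Fin 3 → ℝ => MvPolynomial.eval w p)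
      (by funext i; fin_cases i <;> simp [hv])
  have hq00 : MvPolynomial.eval ![0, 0] q = 1 := by rw [hqeval 0 0]; exact heval
  -- q is a real zero polynomial
  have hqrz : IsRealZeroPoly q := by
    intro y z
    set g : Polynomial ℝ := lineRestrict p ![0, -y, -z] ![1, 0, 0] with hgdef
    have hgdeg : g.natDegree ≤ d := by
      refine (LaxAux.natDegree_aeval_le _ ?_ p).trans hhom.totalDegree_le
      intro i
      exact (Polynomial.natDegree_sub_le _ _).trans
        (max_le (by simp) ((Polynomial.natDegree_C_mul_le _ _).trans (by simp)))
    have hgsplits : g.Splits := hhyp.2 ![0, -y, -z]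
    have hkey : rayRestrict q y z = Polynomial.C ((-1 : ℝ) ^ d) * g.reflect d := by
      apply Polynomial.eq_of_infinite_eval_eq
      refine ((Set.finite_singleton (0 : ℝ)).infinite_compl).mono fun t ht => ?_
      simp only [Set.mem_compl_iff, Set.mem_singleton_iff] at ht
      have ht' : (t : ℝ) ≠ 0 := ht
      show (rayRestrict q y z).eval t = _
      have hray : rayRestrict q y z
          = MvPolynomial.aeval
              ![(1 : Polynomial ℝ), Polynomial.C y * Polynomial.X,
                Polynomial.C z * Polynomial.X] p := by
        rw [rayRestrict, hqdef, LaxAux.mv_aeval_mv_aeval]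
        exact congrArg (fun w : Fin 3 → Polynomial ℝ => MvPolynomial.aeval w p)
          (by funext i; fin_cases i <;> simp [hv])
      have hL : (rayRestrict q y z).eval t = MvPolynomial.eval ![1, y * t, z * t] p := by
        rw [hray, LaxAux.poly_eval_mv_aeval]
        exact congrArg (fun w : Fin 3 → ℝ => MvPolynomial.eval w p)
          (by funext i; fin_cases i <;> simp)
      have hginv : g.eval t⁻¹ = MvPolynomial.eval ![-t⁻¹, -y, -z] p := by
        rw [hgdef, lineRestrict, LaxAux.poly_eval_mv_aeval]
        exact congrArg (fun w : Fin 3 → ℝ => MvPolynomial.eval w p)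
          (by funext i; fin_cases i <;> simp)
      have hvec : ![-t⁻¹, -y, -z] = (-t⁻¹) • ![(1 : ℝ), y * t, z * t] := by
        funext i
        fin_cases i <;> simp <;> field_simp <;> ring
      have hR : (Polynomial.C ((-1 : ℝ) ^ d) * g.reflect d).eval t
          = MvPolynomial.eval ![1, y * t, z * t] p := by
        rw [Polynomial.eval_mul, Polynomial.eval_C, LaxAux.eval_reflect hgdeg ht', hginv, hvec,
          LaxAux.eval_smul_of_isHomogeneous hhom]
        have harr : (-1 : ℝ) ^ d * (t ^ d * ((-t⁻¹) ^ d
            * MvPolynomial.eval ![(1 : ℝ), y * t, z * t] p))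
            = ((-1) * t * (-t⁻¹)) ^ d * MvPolynomial.eval ![(1 : ℝ), y * t, z * t] p := by
          rw [mul_pow, mul_pow]; ring
        rw [harr]
        have h1 : (-1 : ℝ) * t * (-t⁻¹) = 1 := by field_simp
        rw [h1, one_pow, one_mul]
      rw [hL, hR]
    show (rayRestrict q y z).Splits
    rw [hkey]
    exact Polynomial.Splits.mul (Polynomial.Splits.C _)
      (LaxAux.splits_reflect hgsplits hgdeg)
  -- degree of q
  have hdle : q.totalDegree ≤ d := by
    refine (LaxAux.totalDegree_aeval_le v ?_ p).trans hhom.totalDegree_le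
    intro i
    fin_cases i <;>
      simp [hv, MvPolynomial.totalDegree_X, MvPolynomial.totalDegree_one]
  set d' : ℕ := q.totalDegree with hd'def
  have hBC : ∃ B C : Matrix (Fin d') (Fin d') ℝ, B.IsSymm ∧ C.IsSymm ∧
      ∀ y z : ℝ, MvPolynomial.eval ![y, z] q
        = ((1 : Matrix (Fin d') (Fin d') ℝ) + y • B + z • C).det := by
    rcases Nat.eq_zero_or_pos d' with h0 | hpos
    · refine ⟨0, 0, by simp [Matrix.IsSymm], by simp [Matrix.IsSymm], fun y z => ?_⟩
      have : IsEmpty (Fin d') := by rw [h0]; infer_instance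
      rw [Matrix.det_isEmpty]
      have hqC := LaxAux.eq_C_of_totalDegree_eq_zero (q := q) h0
      conv_lhs => rw [hqC]
      rw [MvPolynomial.eval_C]
      have h2 := hq00
      conv_lhs at h2 => rw [hqC]
      rw [MvPolynomial.eval_C] at h2
      exact h2
    · exact H d' hpos q hqrz rfl hq00
  obtain ⟨B', C', hB', hC', hdet⟩ := hBC
  have hsum : d' + (d - d') = d := Nat.add_sub_cancel' hdle
  set E : Fin d' ⊕ Fin (d - d') ≃ Fin d := finSumFinEquiv.trans (finCongr hsum) with hE
  set A := Matrix.reindexAlgEquiv ℝ ℝ E with hA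
  set Bp : Matrix (Fin d) (Fin d) ℝ := A (Matrix.fromBlocks B' 0 0 0) with hBp
  set Cp : Matrix (Fin d) (Fin d) ℝ := A (Matrix.fromBlocks C' 0 0 0) with hCp
  have hsymm : ∀ M : Matrix (Fin d') (Fin d') ℝ, M.IsSymm →
      (A (Matrix.fromBlocks M 0 0 0)).IsSymm := by
    intro M hM
    show Matrix.transpose (A (Matrix.fromBlocks M 0 0 0)) = _
    rw [hA, Matrix.reindexAlgEquiv_apply, Matrix.transpose_reindex, Matrix.fromBlocks_transpose]
    rw [Matrix.transpose_zero, Matrix.transpose_zero, Matrix.transpose_zero, hM]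
  refine ⟨Bp, Cp, hsymm B' hB', hsymm C' hC', ?_⟩
  intro x y z
  set F : Polynomial ℝ :=
    MvPolynomial.aeval ![Polynomial.X, Polynomial.C y, Polynomial.C z] p with hF
  set Mp : Matrix (Fin d) (Fin d) (Polynomial ℝ) := Matrix.of fun i j =>
    Polynomial.X * Polynomial.C ((1 : Matrix (Fin d) (Fin d) ℝ) i j)
      + Polynomial.C (y * Bp i j + z * Cp i j) with hMp
  set G : Polynomial ℝ := Mp.det with hG
  have hFeval : ∀ x : ℝ, F.eval x = MvPolynomial.eval ![x, y, z] p := by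
    intro x
    rw [hF, LaxAux.poly_eval_mv_aeval]
    exact congrArg (fun w : Fin 3 → ℝ => MvPolynomial.eval w p)
      (by funext i; fin_cases i <;> simp)
  have hGeval : ∀ x : ℝ, G.eval x
      = (x • (1 : Matrix (Fin d) (Fin d) ℝ) + y • Bp + z • Cp).det := by
    intro x
    have hmap : Mp.map (Polynomial.evalRingHom x)
        = x • (1 : Matrix (Fin d) (Fin d) ℝ) + y • Bp + z • Cp := by
      ext i j
      simp only [hMp, Matrix.map_apply, Matrix.of_apply, Polynomial.eval_add,
        Polynomial.eval_mul, Polynomial.eval_X, Polynomial.eval_C, Polynomial.coe_evalRingHom,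
        Matrix.add_apply, Matrix.smul_apply, smul_eq_mul]
      ring
    have h := (Polynomial.evalRingHom x).map_det Mp
    rw [hG]
    show Polynomial.evalRingHom x Mp.det = _
    rw [h]
    congr 1
  have hFG : F = G := by
    apply Polynomial.eq_of_infinite_eval_eq
    refine ((Set.finite_singleton (0 : ℝ)).infinite_compl).mono fun x hx => ?_
    simp only [Set.mem_compl_iff, Set.mem_singleton_iff] at hx
    show F.eval x = G.eval x
    have hvx : ![x, y, z] = x • ![(1 : ℝ), y / x, z / x] := by
      funext i
      fin_cases i <;> simp <;> field_simp
    have hstep1 : F.eval x = x ^ d * MvPolynomial.eval ![y / x, z / x] q := by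
      rw [hFeval, hvx, LaxAux.eval_smul_of_isHomogeneous hhom, hqeval]
    have hscale : x • ((1 : Matrix (Fin d') (Fin d') ℝ) + (y / x) • B' + (z / x) • C')
        = x • (1 : Matrix (Fin d') (Fin d') ℝ) + y • B' + z • C' := by
      rw [smul_add, smul_add, smul_smul, smul_smul]
      congr 2 <;> · congr 1; field_simp
    have hstep2 : (x • (1 : Matrix (Fin d') (Fin d') ℝ) + y • B' + z • C').det
        = x ^ d' * ((1 : Matrix (Fin d') (Fin d') ℝ) + (y / x) • B' + (z / x) • C').det := by
      rw [← hscale, Matrix.det_smul, Fintype.card_fin]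
    have hblock : x • (1 : Matrix (Fin d) (Fin d) ℝ) + y • Bp + z • Cp
        = A (Matrix.fromBlocks
            (x • (1 : Matrix (Fin d') (Fin d') ℝ) + y • B' + z • C') 0 0
            (x • (1 : Matrix (Fin (d - d')) (Fin (d - d')) ℝ))) := by
      have hone : (1 : Matrix (Fin d) (Fin d) ℝ) = A 1 := (map_one A).symm
      rw [hBp, hCp, hone, ← map_smul, ← map_smul, ← map_smul, ← map_add, ← map_add]
      congr 1
      rw [← Matrix.fromBlocks_one, Matrix.fromBlocks_smul, Matrix.fromBlocks_smul,
        Matrix.fromBlocks_smul, Matrix.fromBlocks_add, Matrix.fromBlocks_add]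
      congr 1 <;> simp
    have hdetblock : (x • (1 : Matrix (Fin d) (Fin d) ℝ) + y • Bp + z • Cp).det
        = (x • (1 : Matrix (Fin d') (Fin d') ℝ) + y • B' + z • C').det * x ^ (d - d') := by
      rw [hblock, hA, Matrix.reindexAlgEquiv_apply, Matrix.det_reindex_self,
        Matrix.det_fromBlocks_zero₂₁, Matrix.det_smul, Matrix.det_one, Fintype.card_fin, mul_one]
    rw [hstep1, hGeval, hdetblock, hstep2, hdet]
    rw [show x ^ d = x ^ (d - d') * x ^ d' by rw [← pow_add]; congr 1; omega]
    ring
  rw [← hFeval x, hFG, hGeval x]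
end

section
/- Suppose that for every positive integer d, every homogeneous polynomial p of degree d on ℝ³ that is hyperbolic with respect to e = (1,0,0) and satisfies p(e) = 1 can be written as p(x,y,z) = det(xI + yB + zC) for some d×d real symmetric matrices B and C. Then for every positive integer d, every real zero polynomial q of degree d on ℝ² with q(0,0) = 1 can be written as q(y,z) = det(I + yB + zC) for some d×d real symmetric matrices B and C. -/
section Helpers

open Polynomial


lemma natDegree_reflect_le {f : Polynomial ℝ} {N : ℕ} (hf : f.natDegree ≤ N) :
    (reflect N f).natDegree ≤ N := by
  rw [natDegree_le_iff_coeff_eq_zero]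
  intro m hm
  rw [coeff_reflect, revAt_eq_self_of_lt hm]
  exact coeff_eq_zero_of_natDegree_lt (lt_of_le_of_lt hf hm)

lemma aux_reflect_splits {r : Polynomial ℝ} (hr : r.Splits) {d : ℕ}
    (hd : r.natDegree ≤ d) : (reflect d r).Splits := by
  by_cases h0 : r = 0
  · simpa [h0] using Splits.zero
  have key : ∀ (s : Multiset ℝ) (n : ℕ), Multiset.card s ≤ n →
      ((reflect n (s.map (fun a => X - C a)).prod).Splits) := by
    intro s
    induction s using Multiset.induction with
    | empty => intro n _; simpa using Splits.pow Splits.X _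
    | cons a s ih =>
      intro n hn
      rw [Multiset.card_cons] at hn
      have hs : Multiset.card s ≤ n - 1 := by omega
      have hn' : n = 1 + (n - 1) := by omega
      rw [Multiset.map_cons, Multiset.prod_cons, hn',
        reflect_mul _ _ (natDegree_X_sub_C a).le
          (by rw [natDegree_multiset_prod_X_sub_C_eq_card]; exact hs)]
      exact Splits.mul
        (Splits.of_natDegree_le_one (natDegree_reflect_le (natDegree_X_sub_C a).le)) (ih _ hs)
  have hcard : Multiset.card r.roots ≤ d := le_trans (card_roots' r) hd
  rw [hr.eq_prod_roots, reflect_C_mul]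
  exact Splits.mul (Splits.C _) (key _ _ hcard)

lemma aux_splits_comp {g : Polynomial ℝ} (hg : g.Splits) (h : Polynomial ℝ)
    (hh : h.natDegree ≤ 1) : (g.comp h).Splits := by
  by_cases h0 : g = 0
  · simpa [h0] using Splits.zero
  rw [hg.eq_prod_roots, mul_comp, C_comp, multiset_prod_comp, Multiset.map_map]
  refine Splits.mul (Splits.C _)
    (Multiset.prod_induction _ _ (fun u v hu hv => Splits.mul hu hv) Splits.one ?_)
  intro f hf
  obtain ⟨a, -, rfl⟩ := Multiset.mem_map.mp hf
  simp only [Function.comp_apply, sub_comp, X_comp, C_comp]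
  exact Splits.of_natDegree_le_one
    (le_trans (natDegree_sub_le _ _) (by simp [natDegree_C, hh]))


/-- Homogenization of a polynomial on `ℝ²` to degree `d` on `ℝ³`. -/
noncomputable def homog (d : ℕ) (q : MvPolynomial (Fin 2) ℝ) : MvPolynomial (Fin 3) ℝ :=
  ∑ m ∈ q.support, MvPolynomial.monomial (Finsupp.cons (d - (m 0 + m 1)) m) (q.coeff m)

lemma cons_apply_one (a : ℕ) (m : Fin 2 →₀ ℕ) : Finsupp.cons a m 1 = m 0 := by
  rw [show (1 : Fin 3) = Fin.succ 0 from rfl, Finsupp.cons_succ]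

lemma cons_apply_two (a : ℕ) (m : Fin 2 →₀ ℕ) : Finsupp.cons a m 2 = m 1 := by
  rw [show (2 : Fin 3) = Fin.succ 1 from rfl, Finsupp.cons_succ]

variable {A : Type*} [CommSemiring A] [Algebra ℝ A]

lemma aeval_two_eq (g : Fin 2 → A) (q : MvPolynomial (Fin 2) ℝ) :
    MvPolynomial.aeval g q =
      ∑ m ∈ q.support, algebraMap ℝ A (q.coeff m) * (g 0 ^ m 0 * g 1 ^ m 1) := by
  conv_lhs => rw [q.as_sum]
  rw [map_sum]
  refine Finset.sum_congr rfl fun m _ => ?_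
  rw [MvPolynomial.aeval_monomial, Finsupp.prod_fintype _ _ (fun i => pow_zero _),
    Fin.prod_univ_two]

lemma aeval_homog_eq (d : ℕ) (g : Fin 3 → A) (q : MvPolynomial (Fin 2) ℝ) :
    MvPolynomial.aeval g (homog d q) =
      ∑ m ∈ q.support, algebraMap ℝ A (q.coeff m) *
        (g 0 ^ (d - (m 0 + m 1)) * (g 1 ^ m 0 * g 2 ^ m 1)) := by
  rw [homog, map_sum]
  refine Finset.sum_congr rfl fun m _ => ?_
  rw [MvPolynomial.aeval_monomial, Finsupp.prod_fintype _ _ (fun i => pow_zero _),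
    Fin.prod_univ_three, Finsupp.cons_zero, cons_apply_one, cons_apply_two, mul_assoc]

lemma eval_two_eq (g : Fin 2 → ℝ) (q : MvPolynomial (Fin 2) ℝ) :
    MvPolynomial.eval g q =
      ∑ m ∈ q.support, q.coeff m * (g 0 ^ m 0 * g 1 ^ m 1) := by
  conv_lhs => rw [q.as_sum]
  rw [map_sum]
  refine Finset.sum_congr rfl fun m _ => ?_
  rw [MvPolynomial.eval_monomial, Finsupp.prod_fintype _ _ (fun i => pow_zero _),
    Fin.prod_univ_two]

lemma eval_homog_eq (d : ℕ) (g : Fin 3 → ℝ) (q : MvPolynomial (Fin 2) ℝ) :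
    MvPolynomial.eval g (homog d q) =
      ∑ m ∈ q.support, q.coeff m *
        (g 0 ^ (d - (m 0 + m 1)) * (g 1 ^ m 0 * g 2 ^ m 1)) := by
  rw [homog, map_sum]
  refine Finset.sum_congr rfl fun m _ => ?_
  rw [MvPolynomial.eval_monomial, Finsupp.prod_fintype _ _ (fun i => pow_zero _),
    Fin.prod_univ_three, Finsupp.cons_zero, cons_apply_one, cons_apply_two, mul_assoc]

lemma degree_two_eq (m : Fin 2 →₀ ℕ) : m.degree = m 0 + m 1 := by
  rw [Finsupp.degree, ← Fin.sum_univ_two (f := fun i => m i)]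
  exact Finset.sum_subset (Finset.subset_univ _)
    (fun i _ hi => Finsupp.notMem_support_iff.mp hi)

lemma homog_isHomogeneous {d : ℕ} {q : MvPolynomial (Fin 2) ℝ} (hq : q.totalDegree = d) :
    (homog d q).IsHomogeneous d := by
  apply MvPolynomial.IsHomogeneous.sum
  intro m hm
  apply MvPolynomial.isHomogeneous_monomial
  have hle : m 0 + m 1 ≤ d := by
    rw [← hq, ← degree_two_eq]
    exact MvPolynomial.le_totalDegree hm
  calc (Finsupp.cons (d - (m 0 + m 1)) m).degree
      = ∑ i : Fin 3, Finsupp.cons (d - (m 0 + m 1)) m i :=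
        Finset.sum_subset (Finset.subset_univ _)
          (fun i _ hi => Finsupp.notMem_support_iff.mp hi)
    _ = d := by
        rw [Fin.sum_univ_three, Finsupp.cons_zero, cons_apply_one, cons_apply_two, add_assoc,
          Nat.sub_add_cancel hle]

lemma reflect_sum {ι : Type*} (N : ℕ) (s : Finset ι) (f : ι → Polynomial ℝ) :
    Polynomial.reflect N (∑ i ∈ s, f i) = ∑ i ∈ s, Polynomial.reflect N (f i) := by
  classical
  induction s using Finset.induction with
  | empty => simp
  | insert _ _ h ih => rw [Finset.sum_insert h, Finset.sum_insert h, Polynomial.reflect_add, ih]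

lemma eval_zero_two (q : MvPolynomial (Fin 2) ℝ) :
    MvPolynomial.eval ![0, 0] q = q.coeff 0 := by
  rw [eval_two_eq, Finset.sum_eq_single (0 : Fin 2 →₀ ℕ)]
  · simp
  · intro m hm hne
    have h : m 0 ≠ 0 ∨ m 1 ≠ 0 := by
      by_contra h; push_neg at h
      exact hne (by ext i; fin_cases i <;> simp [h.1, h.2])
    rcases h with h | h <;> simp [zero_pow h]
  · intro h; simp [MvPolynomial.notMem_support_iff.mp h]

lemma eval_e_homog (d : ℕ) (q : MvPolynomial (Fin 2) ℝ) :
    MvPolynomial.eval ![1, 0, 0] (homog d q) = q.coeff 0 := by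
  rw [eval_homog_eq, Finset.sum_eq_single (0 : Fin 2 →₀ ℕ)]
  · simp
  · intro m hm hne
    have h : m 0 ≠ 0 ∨ m 1 ≠ 0 := by
      by_contra h; push_neg at h
      exact hne (by ext i; fin_cases i <;> simp [h.1, h.2])
    rcases h with h | h <;> simp [zero_pow h]
  · intro h; simp [MvPolynomial.notMem_support_iff.mp h]

lemma eval_one_homog (d : ℕ) (q : MvPolynomial (Fin 2) ℝ) (y z : ℝ) :
    MvPolynomial.eval ![1, y, z] (homog d q) = MvPolynomial.eval ![y, z] q := by
  rw [eval_homog_eq, eval_two_eq]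
  refine Finset.sum_congr rfl fun m _ => ?_
  simp

lemma ray_eq (q : MvPolynomial (Fin 2) ℝ) (y z : ℝ) :
    rayRestrict q y z =
      ∑ m ∈ q.support, Polynomial.C (q.coeff m * y ^ m 0 * z ^ m 1) * Polynomial.X ^ (m 0 + m 1) := by
  rw [rayRestrict, aeval_two_eq]
  refine Finset.sum_congr rfl fun m _ => ?_
  simp only [Matrix.cons_val_zero, Matrix.cons_val_one, Matrix.head_cons,
    Polynomial.algebraMap_eq, map_mul, map_pow, mul_pow, pow_add]
  ring

lemma ray_natDegree_le {d : ℕ} {q : MvPolynomial (Fin 2) ℝ} (hd : q.totalDegree = d)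
    (y z : ℝ) : (rayRestrict q y z).natDegree ≤ d := by
  rw [ray_eq]
  apply Polynomial.natDegree_sum_le_of_forall_le
  intro m hm
  have hle : m 0 + m 1 ≤ d := by
    rw [← hd, ← degree_two_eq]; exact MvPolynomial.le_totalDegree hm
  refine le_trans (Polynomial.natDegree_mul_le) ?_
  rw [Polynomial.natDegree_C, Polynomial.natDegree_X_pow, zero_add]
  exact hle

lemma line_eq {d : ℕ} {q : MvPolynomial (Fin 2) ℝ} (hd : q.totalDegree = d) (w : Fin 3 → ℝ) :
    lineRestrict (homog d q) w ![1, 0, 0] =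
      (Polynomial.reflect d (rayRestrict q (w 1) (w 2))).comp (Polynomial.C (w 0) - Polynomial.X) := by
  have hrefl : Polynomial.reflect d (rayRestrict q (w 1) (w 2)) =
      ∑ m ∈ q.support, Polynomial.C (q.coeff m * w 1 ^ m 0 * w 2 ^ m 1) * Polynomial.X ^ (d - (m 0 + m 1)) := by
    rw [ray_eq, reflect_sum]
    refine Finset.sum_congr rfl fun m hm => ?_
    have hle : m 0 + m 1 ≤ d := by
      rw [← hd, ← degree_two_eq]; exact MvPolynomial.le_totalDegree hm
    rw [Polynomial.reflect_C_mul_X_pow, Polynomial.revAt_le hle]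
  rw [hrefl, lineRestrict, aeval_homog_eq, Polynomial.comp, Polynomial.eval₂_finset_sum]
  refine Finset.sum_congr rfl fun m _ => ?_
  rw [Polynomial.eval₂_mul, Polynomial.eval₂_C, Polynomial.eval₂_X_pow]
  simp only [Matrix.cons_val_zero, Matrix.cons_val_one, Matrix.head_cons,
    Polynomial.algebraMap_eq, map_mul, map_pow, map_one, map_zero, one_mul, zero_mul, sub_zero,
    show (![(1:ℝ), 0, 0]) 2 = 0 from rfl]
  ring

end Helpers

/-- the Lax conjecture (every hyperbolic polynomial of degree `d` on `ℝ³` with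
respect to `(1,0,0)` with `p(e) = 1` is `det (x I + y B + z C)`) implies the Helton–Vinnikov
theorem (every real zero polynomial of degree `d` with `q(0,0) = 1` is `det (I + y B + z C)`). -/
theorem lax_implies_helton_vinnikov
    (H : ∀ d : ℕ, 0 < d → ∀ p : MvPolynomial (Fin 3) ℝ,
      p.IsHomogeneous d → IsHyperbolic p ![1, 0, 0] →
      MvPolynomial.eval ![1, 0, 0] p = 1 →
      ∃ B C : Matrix (Fin d) (Fin d) ℝ, B.IsSymm ∧ C.IsSymm ∧
        ∀ x y z : ℝ, MvPolynomial.eval ![x, y, z] p =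
          (x • (1 : Matrix (Fin d) (Fin d) ℝ) + y • B + z • C).det) :
    ∀ d : ℕ, 0 < d → ∀ q : MvPolynomial (Fin 2) ℝ,
      IsRealZeroPoly q → q.totalDegree = d → MvPolynomial.eval ![0, 0] q = 1 →
      ∃ B C : Matrix (Fin d) (Fin d) ℝ, B.IsSymm ∧ C.IsSymm ∧
        ∀ y z : ℝ, MvPolynomial.eval ![y, z] q =
          ((1 : Matrix (Fin d) (Fin d) ℝ) + y • B + z • C).det := by
  intro d hd q hq hdeg hq0
  have hc0 : q.coeff 0 = 1 := by rw [← eval_zero_two]; exact hq0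
  have hom := homog_isHomogeneous hdeg
  have hpe : MvPolynomial.eval ![1, 0, 0] (homog d q) = 1 := by rw [eval_e_homog]; exact hc0
  have hyp : IsHyperbolic (homog d q) ![1, 0, 0] := by
    refine ⟨by rw [hpe]; exact one_ne_zero, fun w => ?_⟩
    have hsplit : (rayRestrict q (w 1) (w 2)).Splits := hq (w 1) (w 2)
    have : (lineRestrict (homog d q) w ![1, 0, 0]).Splits := by
      rw [line_eq hdeg w]
      exact aux_splits_comp (aux_reflect_splits hsplit (ray_natDegree_le hdeg _ _)) _
        (le_trans (Polynomial.natDegree_sub_le _ _)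
          (by simp [Polynomial.natDegree_C, Polynomial.natDegree_X]))
    exact this
  obtain ⟨B, C, hB, hC, hdet⟩ := H d hd _ hom hyp hpe
  refine ⟨B, C, hB, hC, fun y z => ?_⟩
  rw [← eval_one_homog d q y z, hdet 1 y z, one_smul]
end

section
/- Let n ≥ 4 be an integer. Then there do not exist 2×2 real symmetric matrices G₁, G₂, …, Gₙ such that w₁² − Σ_{j=2}^{n} wⱼ² = det(Σ_{j=1}^{n} wⱼGⱼ) for all w ∈ ℝⁿ. Consequently, the exact analogue of the Lax conjecture fails for hyperbolic polynomials in more than three variables. -/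
set_option maxHeartbeats 1000000 in
/-- for `n ≥ 4`, the Lorentz polynomial `w₁² - ∑_{j≥2} wⱼ²` on `ℝⁿ` admits no
representation `det (∑ j, w j • G j)` with `G j` real symmetric `2 × 2` matrices: the exact
analogue of the Lax conjecture fails in more than three variables. -/
theorem lorentz_poly_no_det_representation
    (n : ℕ) (hn : 4 ≤ n) :
    ¬ ∃ G : Fin n → Matrix (Fin 2) (Fin 2) ℝ, (∀ j, (G j).IsSymm) ∧
      ∀ w : Fin n → ℝ,
        w (⟨0, by omega⟩ : Fin n) ^ 2 - ∑ j ∈ Finset.univ.erase (⟨0, by omega⟩ : Fin n), w j ^ 2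
          = (∑ j, w j • G j).det := by
  rintro ⟨G, hsym, h⟩
  set i0 : Fin n := ⟨0, by omega⟩ with hi0
  set i1 : Fin n := ⟨1, by omega⟩ with hi1
  set i2 : Fin n := ⟨2, by omega⟩ with hi2
  set i3 : Fin n := ⟨3, by omega⟩ with hi3
  set A : Matrix (Fin 2) (Fin 3) ℝ :=
    Matrix.of ![![G i1 0 0 - G i1 1 1, G i2 0 0 - G i2 1 1, G i3 0 0 - G i3 1 1],
      ![G i1 0 1, G i2 0 1, G i3 0 1]] with hA
  have hk : LinearMap.ker A.mulVecLin ≠ ⊥ := by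
    apply LinearMap.ker_ne_bot_of_finrank_lt
    simp [Module.finrank_fintype_fun_eq_card]
  obtain ⟨v, hv, hv0⟩ := Submodule.ne_bot_iff _ |>.mp hk
  have hv' : A.mulVec v = 0 := hv
  have he1 : (G i1 0 0 - G i1 1 1) * v 0 + (G i2 0 0 - G i2 1 1) * v 1
      + (G i3 0 0 - G i3 1 1) * v 2 = 0 := by
    have := congrFun hv' 0
    simpa [Matrix.mulVec, dotProduct, hA, Fin.sum_univ_three] using this
  have he2 : G i1 0 1 * v 0 + G i2 0 1 * v 1 + G i3 0 1 * v 2 = 0 := by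
    have := congrFun hv' 1
    simpa [Matrix.mulVec, dotProduct, hA, Fin.sum_univ_three] using this
  set w : Fin n → ℝ := fun j =>
    if j = i1 then v 0 else if j = i2 then v 1 else if j = i3 then v 2 else 0 with hw
  set M : Matrix (Fin 2) (Fin 2) ℝ := v 0 • G i1 + v 1 • G i2 + v 2 • G i3 with hM
  have h12 : i1 ≠ i2 := by simp [hi1, hi2, Fin.ext_iff]
  have h13 : i1 ≠ i3 := by simp [hi1, hi3, Fin.ext_iff]
  have h23 : i2 ≠ i3 := by simp [hi2, hi3, Fin.ext_iff]
  have h01 : i0 ≠ i1 := by simp [hi0, hi1, Fin.ext_iff]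
  have h02 : i0 ≠ i2 := by simp [hi0, hi2, Fin.ext_iff]
  have h03 : i0 ≠ i3 := by simp [hi0, hi3, Fin.ext_iff]
  have hw1 : w i1 = v 0 := by simp [hw]
  have hw2 : w i2 = v 1 := by simp [hw, h12.symm]
  have hw3 : w i3 = v 2 := by simp [hw, h13.symm, h23.symm]
  have hw0 : w i0 = 0 := by simp [hw, h01, h02, h03]
  have hsub : ({i1, i2, i3} : Finset (Fin n)) ⊆ Finset.univ.erase i0 := by
    intro j hj
    simp only [Finset.mem_insert, Finset.mem_singleton] at hj
    rcases hj with rfl | rfl | rfl <;>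
      simp [Finset.mem_erase, h01.symm, h02.symm, h03.symm]
  have hsumM : ∑ j, w j • G j = M := by
    rw [← Finset.sum_subset (Finset.subset_univ ({i1, i2, i3} : Finset (Fin n)))
      (by
        intro j _ hj
        simp only [Finset.mem_insert, Finset.mem_singleton, not_or] at hj
        have : w j = 0 := by simp [hw, hj.1, hj.2.1, hj.2.2]
        simp [this])]
    rw [Finset.sum_insert (by simp [h12, h13]), Finset.sum_insert (by simp [h23]),
      Finset.sum_singleton, hw1, hw2, hw3, hM, add_assoc]
  have hsumsq : ∑ j ∈ Finset.univ.erase i0, w j ^ 2 = v 0 ^ 2 + v 1 ^ 2 + v 2 ^ 2 := by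
    rw [← Finset.sum_subset hsub
      (by
        intro j _ hj
        simp only [Finset.mem_insert, Finset.mem_singleton, not_or] at hj
        simp [hw, hj.1, hj.2.1, hj.2.2])]
    rw [Finset.sum_insert (by simp [h12, h13]), Finset.sum_insert (by simp [h23]),
      Finset.sum_singleton, hw1, hw2, hw3, add_assoc]
  have key := h w
  rw [hw0, hsumsq, hsumM, Matrix.det_fin_two] at key
  -- entries of M
  have hM00 : M 0 0 = v 0 * G i1 0 0 + v 1 * G i2 0 0 + v 2 * G i3 0 0 := by
    simp [hM, Matrix.add_apply, Matrix.smul_apply, smul_eq_mul]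
  have hM11 : M 1 1 = v 0 * G i1 1 1 + v 1 * G i2 1 1 + v 2 * G i3 1 1 := by
    simp [hM, Matrix.add_apply, Matrix.smul_apply, smul_eq_mul]
  have hM01 : M 0 1 = 0 := by
    simp only [hM, Matrix.add_apply, Matrix.smul_apply, smul_eq_mul]
    linarith [he2]
  have hM10 : M 1 0 = 0 := by
    have s1 := (hsym i1).apply 0 1
    have s2 := (hsym i2).apply 0 1
    have s3 := (hsym i3).apply 0 1
    simp only [hM, Matrix.add_apply, Matrix.smul_apply, smul_eq_mul] at hM01 ⊢
    rw [s1, s2, s3]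
    linarith [he2]
  have hMeq : M 1 1 = M 0 0 := by rw [hM00, hM11]; linarith [he1]
  rw [hM01, hM10, hMeq] at key
  -- key : 0 ^ 2 - (v 0 ^ 2 + v 1 ^ 2 + v 2 ^ 2) = M 0 0 * M 0 0 - 0 * 0
  have hvpos : 0 < v 0 ^ 2 + v 1 ^ 2 + v 2 ^ 2 := by
    rcases Function.ne_iff.mp hv0 with ⟨i, hi⟩
    fin_cases i <;> simp only [Pi.zero_apply] at hi <;> positivity
  nlinarith [sq_nonneg (M 0 0)]
end
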